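/- Let (X,𝒳) be a measurable space, let (Y,𝒴,ν) be a finite measure space with ν(Y) = 1, and let ρ: X×Y → [0,∞] be a measurable distortion function. Let k ∈ (0,∞), suppose ν is ρ^{1/k}-superregular of dimension m ∈ (0,∞) with superregularity constants b ∈ (0,∞) and δ₀ ∈ (0,∞], and assume sup_{x∈X,y∈Y} ρ(x,y)^{1/k} < ∞ whenever δ₀ < ∞. Then every random variable X taking values in (X,𝒳) satisfies: (i) the upper k-th quantization dimension satisfies limsup_{n→∞} k·log(n)/log(1/V_n(X)) ≤ m; and (ii) if the k-th quantization dimension D_k(X) exists and equals m, then the upper k-th quantization coefficient satisfies limsup_{n→∞} n^{k/m}·V_n(X) ≤ Γ(1+k/m)·b^{-k/m}. -/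

import Mathlib

open MeasureTheory Filter
open scoped ENNReal Classical

/-- The `n`-th quantization error `V_n(X) = inf_f E[ρ(X, f(X))]`, the infimum being over
all measurable maps `f : X → Y` whose range contains at most `n` points. -/
noncomputable def quantErr {X Y : Type*} [MeasurableSpace X] [MeasurableSpace Y]
    (μX : Measure X) (ρ : X → Y → ℝ≥0∞) (n : ℕ) : ℝ≥0∞ :=
  ⨅ (f : X → Y)
    (_ : Measurable f ∧ ∃ s : Finset Y, s.card ≤ n ∧ ∀ x, f x ∈ s),
    ∫⁻ x, ρ x (f x) ∂μX

/-- The quantity `k·log n / log(1/V_n(X))`, whose `liminf`/`limsup` as `n → ∞` are the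
lower/upper `k`-th quantization dimensions. -/
noncomputable def qRatio {X Y : Type*} [MeasurableSpace X] [MeasurableSpace Y]
    (μX : Measure X) (ρ : X → Y → ℝ≥0∞) (k : ℝ) (n : ℕ) : ℝ :=
  k * Real.log n / Real.log (1 / (quantErr μX ρ n).toReal)

/-! Random coding. Draw the `n` codebook points independently from `ν`. For fixed `x` the tail
formula gives `E[minᵢ ρ(x, Yᵢ)] = ∫₀^∞ ν(ρ(x, ·) > t)ⁿ dt`. Superregularity bounds the tail
`ν(ρ(x, ·) > t)` by `1 - b t^{m/k} ≤ exp(-b t^{m/k})` for small `t` and by a constant `θ < 1` for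
all larger `t`, while `ρ ≤ R` because `δ₀` is forced to be finite (`b t^m ≤ ν(Y) = 1` fails for
large `t`). Hence the integral is at most `Γ(1 + k/m) (n b)^{-k/m} + R θⁿ`; averaging over `x` and
picking a codebook at least as good as the average yields
`V_n ≤ Γ(1 + k/m) b^{-k/m} n^{-k/m} + R θⁿ`, and both limsup bounds follow from this. -/

open Set Real Topology

lemma lintegral_exp_neg_mul_rpow {p B : ℝ} (hp : 0 < p) (hB : 0 < B) :
    ∫⁻ t in Ioi (0 : ℝ), ENNReal.ofReal (exp (-B * t ^ p)) =
      ENNReal.ofReal (B ^ (-1 / p) * Gamma (1 / p + 1)) := by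
  have hint_exp : IntegrableOn (fun t : ℝ => exp (-B * t ^ p)) (Ioi 0) := by
    simpa only [rpow_zero, one_mul] using
      integrableOn_rpow_mul_exp_neg_mul_rpow (s := 0) neg_one_lt_zero hp hB
  rw [← ofReal_integral_eq_lintegral_ofReal hint_exp (ae_of_all _ fun _ => (exp_pos _).le),
    integral_exp_neg_mul_rpow hp hB]

lemma lintegral_eq_lintegral_meas_ofReal_lt {α : Type*} [MeasurableSpace α] (μ : Measure α)
    {g : α → ℝ≥0∞} (hg : AEMeasurable g μ) (hg_fin : ∀ a, g a ≠ ∞) :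
    ∫⁻ a, g a ∂μ = ∫⁻ t in Ioi 0, μ {a | ENNReal.ofReal t < g a} := by
  have h := lintegral_eq_lintegral_meas_lt μ (ae_of_all _ fun a => (g a).toReal_nonneg)
    hg.ennreal_toReal
  simp only [ENNReal.ofReal_toReal (hg_fin _)] at h
  rw [h]
  refine setLIntegral_congr_fun measurableSet_Ioi fun t ht => ?_
  simp_rw [ENNReal.ofReal_lt_iff_lt_toReal (le_of_lt ht) (hg_fin _)]

lemma setLIntegral_Ioi_le_of_le_exp {F : ℝ → ℝ≥0∞} {B p τ R : ℝ} {c : ℝ≥0∞}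
    (hp : 0 < p) (hB : 0 < B)
    (h_small : ∀ t, 0 < t → t ≤ τ → F t ≤ ENNReal.ofReal (exp (-B * t ^ p)))
    (h_mid : ∀ t, τ < t → F t ≤ c) (h_large : ∀ t, R ≤ t → F t = 0) :
    ∫⁻ t in Ioi 0, F t ≤
      ENNReal.ofReal (B ^ (-1 / p) * Gamma (1 / p + 1)) + c * ENNReal.ofReal R := by
  have hF : ∀ t ∈ Ioi (0 : ℝ),
      F t ≤ ENNReal.ofReal (exp (-B * t ^ p)) + (Iio R).indicator (fun _ => c) t := by
    intro t ht
    by_cases htτ : t ≤ τ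
    · exact (h_small t ht htτ).trans le_self_add
    by_cases htR : t < R
    · rw [Set.indicator_of_mem (show t ∈ Iio R from htR)]
      exact (h_mid t (not_le.1 htτ)).trans le_add_self
    · simp [h_large t (not_lt.1 htR)]
  calc ∫⁻ t in Ioi 0, F t
      ≤ ∫⁻ t in Ioi 0, ENNReal.ofReal (exp (-B * t ^ p)) + (Iio R).indicator (fun _ => c) t :=
        setLIntegral_mono' measurableSet_Ioi hF
    _ = ENNReal.ofReal (B ^ (-1 / p) * Gamma (1 / p + 1)) + c * volume (Ioo 0 R) := by
        rw [lintegral_add_right _ (measurable_const.indicator measurableSet_Iio),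
          lintegral_exp_neg_mul_rpow hp hB, lintegral_indicator_const measurableSet_Iio,
          Measure.restrict_apply measurableSet_Iio, Iio_inter_Ioi]
    _ = _ := by rw [Real.volume_Ioo, sub_zero]

lemma measure_pi_lt_iInf {ι Y : Type*} [Fintype ι] [Nonempty ι] [MeasurableSpace Y]
    (ν : Measure Y) [SigmaFinite ν] (g : Y → ℝ≥0∞) (a : ℝ≥0∞) :
    Measure.pi (fun _ : ι => ν) {ys | a < ⨅ i, g (ys i)} = ν {y | a < g y} ^ Fintype.card ι := by
  have : {ys : ι → Y | a < ⨅ i, g (ys i)} = Set.pi univ fun _ => {y | a < g y} := by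
    ext ys
    obtain ⟨i₀, hi₀⟩ := Finite.exists_min fun i => g (ys i)
    simp only [mem_ofPred_eq, Set.mem_pi, mem_univ, true_implies]
    rw [show ⨅ i, g (ys i) = g (ys i₀) from le_antisymm (iInf_le _ _) (le_iInf hi₀)]
    exact ⟨fun h i => h.trans_le (hi₀ i), fun h => h i₀⟩
  rw [this, Measure.pi_pi, Finset.prod_const, Finset.card_univ]

lemma lintegral_pi_iInf_eq {ι Y : Type*} [Fintype ι] [Nonempty ι] [MeasurableSpace Y]
    (ν : Measure Y) [SigmaFinite ν] {g : Y → ℝ≥0∞} (hg : Measurable g) (hg_fin : ∀ y, g y ≠ ∞) :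
    ∫⁻ ys : ι → Y, ⨅ i, g (ys i) ∂Measure.pi (fun _ => ν) =
      ∫⁻ t in Ioi 0, ν {y | ENNReal.ofReal t < g y} ^ Fintype.card ι := by
  have hmeas : Measurable fun ys : ι → Y => ⨅ i, g (ys i) :=
    Measurable.iInf fun i => hg.comp (measurable_pi_apply i)
  rw [lintegral_eq_lintegral_meas_ofReal_lt _ hmeas.aemeasurable
    fun ys => ne_top_of_le_ne_top (hg_fin _) (iInf_le _ (Classical.arbitrary ι))]
  simp_rw [measure_pi_lt_iInf]

lemma exists_measurable_forall_le {X ι β : Type*} [MeasurableSpace X] [MeasurableSpace ι]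
    [Finite ι] [Nonempty ι] [LinearOrder β] {g : ι → X → β}
    (hg : ∀ i j, MeasurableSet {x | g i x ≤ g j x}) :
    ∃ σ : X → ι, Measurable σ ∧ ∀ x j, g (σ x) x ≤ g j x := by
  obtain ⟨e, he⟩ := exists_surjective_nat ι
  have hmin : ∀ x, ∃ N, ∀ j, g (e N) x ≤ g j x := fun x => by
    obtain ⟨i, hi⟩ := Finite.exists_min fun i => g i x
    obtain ⟨N, rfl⟩ := he i
    exact ⟨N, hi⟩
  exact ⟨fun x => e (Nat.find (hmin x)),
    measurable_from_nat.comp (measurable_find hmin fun N => by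
      simpa only [ofPred_forall] using MeasurableSet.iInter (hg (e N))),
    fun x => Nat.find_spec (hmin x)⟩

section Quantization

variable {X Y : Type*} [MeasurableSpace X] [MeasurableSpace Y]

lemma quantErr_le_lintegral_iInf (μX : Measure X) {ρ : X → Y → ℝ≥0∞}
    (hρ : ∀ y, Measurable fun x => ρ x y) {n : ℕ} [NeZero n] (ys : Fin n → Y) :
    quantErr μX ρ n ≤ ∫⁻ x, ⨅ i, ρ x (ys i) ∂μX := by
  obtain ⟨σ, hσ, hmin⟩ := exists_measurable_forall_le (g := fun i x => ρ x (ys i))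
    fun i j => measurableSet_le (hρ _) (hρ _)
  refine (iInf₂_le (fun x => ys (σ x)) ⟨(measurable_of_countable ys).comp hσ,
    Finset.univ.image ys, Finset.card_image_le.trans (by simp),
    fun x => Finset.mem_image_of_mem _ (Finset.mem_univ _)⟩).trans_eq ?_
  exact lintegral_congr fun x => le_antisymm (le_iInf (hmin x)) (iInf_le _ _)

lemma quantErr_le_of_forall_lintegral_pi_le (ν : Measure Y) [IsProbabilityMeasure ν]
    (μX : Measure X) [SFinite μX] {ρ : X → Y → ℝ≥0∞} (hρ : Measurable (Function.uncurry ρ))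
    {n : ℕ} [NeZero n] {c : ℝ≥0∞}
    (hc : ∀ x, ∫⁻ ys : Fin n → Y, ⨅ i, ρ x (ys i) ∂Measure.pi (fun _ => ν) ≤ c) :
    quantErr μX ρ n ≤ c * μX univ := by
  have hG : Measurable (Function.uncurry fun (ys : Fin n → Y) (x : X) => ⨅ i, ρ x (ys i)) :=
    Measurable.iInf fun i =>
      hρ.comp (measurable_snd.prodMk ((measurable_pi_apply i).comp measurable_fst))
  obtain ⟨ys, hys⟩ := exists_le_lintegral (μ := Measure.pi fun _ : Fin n => ν)
    (hG.lintegral_prod_right' (ν := μX)).aemeasurable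
  calc quantErr μX ρ n
      ≤ ∫⁻ x, ⨅ i, ρ x (ys i) ∂μX :=
        quantErr_le_lintegral_iInf μX (fun y => hρ.comp (measurable_id.prodMk measurable_const)) ys
    _ ≤ ∫⁻ ys, ∫⁻ x, ⨅ i, ρ x (ys i) ∂μX ∂Measure.pi (fun _ => ν) := hys
    _ = ∫⁻ x, ∫⁻ ys, ⨅ i, ρ x (ys i) ∂Measure.pi (fun _ => ν) ∂μX :=
        lintegral_lintegral_swap (μ := Measure.pi fun _ : Fin n => ν) hG.aemeasurable
    _ ≤ ∫⁻ _, c ∂μX := lintegral_mono hc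
    _ = c * μX univ := lintegral_const c

end Quantization

def IsSuperregular {X Y : Type*} [MeasurableSpace Y] (ν : Measure Y) (d : X → Y → ℝ≥0∞)
    (m b : ℝ) (δ₀ : ℝ≥0∞) : Prop :=
  ∀ x t, 0 < t → ENNReal.ofReal t < δ₀ →
    ENNReal.ofReal (b * t ^ m) ≤ ν {y | d x y < ENNReal.ofReal t}

namespace IsSuperregular

variable {X Y : Type*} [MeasurableSpace Y] {ν : Measure Y} [IsProbabilityMeasure ν]
  {d : X → Y → ℝ≥0∞} {m b : ℝ} {δ₀ : ℝ≥0∞}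

lemma ne_top [Nonempty X] (h : IsSuperregular ν d m b δ₀) (hm : 0 < m) (hb : 0 < b) :
    δ₀ ≠ ∞ := by
  intro hδ
  have h2 := (h (Classical.arbitrary X) ((2 / b) ^ (1 / m)) (by positivity)
    (hδ ▸ ENNReal.ofReal_lt_top)).trans prob_le_one
  rw [ENNReal.ofReal_le_one, ← rpow_mul (by positivity), one_div_mul_cancel hm.ne', rpow_one,
    mul_div_cancel₀ _ hb.ne'] at h2
  norm_num at h2

lemma measure_ofReal_le_le (h : IsSuperregular ν d m b δ₀) (hd : ∀ x, Measurable (d x))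
    (hb : 0 ≤ b) (x : X) {s : ℝ} (hs : 0 < s) (hsδ : ENNReal.ofReal s < δ₀) :
    ν {y | ENNReal.ofReal s ≤ d x y} ≤ ENNReal.ofReal (1 - b * s ^ m) := by
  have hcompl : {y | ENNReal.ofReal s ≤ d x y} = {y | d x y < ENNReal.ofReal s}ᶜ := by
    ext; simp
  rw [hcompl, prob_compl_eq_one_sub (measurableSet_lt (hd x) measurable_const),
    ENNReal.ofReal_sub _ (by positivity), ENNReal.ofReal_one]
  exact tsub_le_tsub_left (h x s hs hsδ) 1

variable {ρ : X → Y → ℝ≥0∞} {k : ℝ}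

lemma measure_lt_le_of_rpow_le
    (h : IsSuperregular ν (fun x y => ρ x y ^ (1 / k)) m b δ₀) (hρ : ∀ x, Measurable (ρ x))
    (hk : 0 < k) (hb : 0 ≤ b) (x : X) {s t : ℝ} (hs : 0 < s) (hsδ : ENNReal.ofReal s < δ₀)
    (hst : s ^ k ≤ t) :
    ν {y | ENNReal.ofReal t < ρ x y} ≤ ENNReal.ofReal (1 - b * s ^ m) := by
  refine le_trans (measure_mono fun y (hy : ENNReal.ofReal t < ρ x y) => ?_)
    (h.measure_ofReal_le_le (fun x => (hρ x).pow_const _) hb x hs hsδ)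
  calc ENNReal.ofReal s = ENNReal.ofReal (s ^ k) ^ (1 / k) := by
        rw [← ENNReal.ofReal_rpow_of_pos hs, ← ENNReal.rpow_mul, mul_one_div_cancel hk.ne',
          ENNReal.rpow_one]
    _ ≤ ρ x y ^ (1 / k) :=
        ENNReal.rpow_le_rpow ((ENNReal.ofReal_le_ofReal hst).trans hy.le) (by positivity)

lemma measure_lt_le_exp
    (h : IsSuperregular ν (fun x y => ρ x y ^ (1 / k)) m b δ₀) (hρ : ∀ x, Measurable (ρ x))
    (hk : 0 < k) (hb : 0 ≤ b) (x : X) {t : ℝ} (ht : 0 < t)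
    (htδ : ENNReal.ofReal (t ^ (1 / k)) < δ₀) :
    ν {y | ENNReal.ofReal t < ρ x y} ≤ ENNReal.ofReal (exp (-(b * t ^ (m / k)))) := by
  have hroot : (t ^ (1 / k)) ^ k = t := by
    rw [← rpow_mul ht.le, one_div_mul_cancel hk.ne', rpow_one]
  refine (h.measure_lt_le_of_rpow_le hρ hk hb x (by positivity) htδ hroot.le).trans
    (ENNReal.ofReal_le_ofReal ?_)
  rw [← rpow_mul ht.le, one_div_mul_eq_div]
  exact one_sub_le_exp_neg _

lemma lintegral_pi_iInf_le
    (h : IsSuperregular ν (fun x y => ρ x y ^ (1 / k)) m b δ₀) (hρ : ∀ x, Measurable (ρ x))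
    (hk : 0 < k) (hm : 0 < m) (hb : 0 < b) {s R : ℝ} (hs : 0 < s) (hsδ : ENNReal.ofReal s < δ₀)
    (hR : ∀ x y, ρ x y ≤ ENNReal.ofReal R) (x : X) {n : ℕ} [NeZero n] :
    ∫⁻ ys : Fin n → Y, ⨅ i, ρ x (ys i) ∂Measure.pi (fun _ => ν) ≤
      ENNReal.ofReal ((n * b) ^ (-(k / m)) * Gamma (k / m + 1)) +
        ENNReal.ofReal (1 - b * s ^ m) ^ n * ENNReal.ofReal R := by
  rw [lintegral_pi_iInf_eq ν (hρ x) fun y => ne_top_of_le_ne_top ENNReal.ofReal_ne_top (hR x y),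
    Fintype.card_fin]
  have hexp : -(k / m) = -1 / (m / k) := by rw [neg_div, one_div_div]
  rw [hexp, ← one_div_div m k]
  refine setLIntegral_Ioi_le_of_le_exp (τ := s ^ k) (by positivity)
    (by have := NeZero.pos n; positivity) (fun t ht hts => ?_) (fun t hst => ?_) (fun t hRt => ?_)
  · have htδ : ENNReal.ofReal (t ^ (1 / k)) < δ₀ := by
      refine (ENNReal.ofReal_le_ofReal ?_).trans_lt hsδ
      calc t ^ (1 / k) ≤ (s ^ k) ^ (1 / k) := by gcongr
        _ = s := by rw [← rpow_mul hs.le, mul_one_div_cancel hk.ne', rpow_one]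
    calc ν {y | ENNReal.ofReal t < ρ x y} ^ n
        ≤ ENNReal.ofReal (exp (-(b * t ^ (m / k)))) ^ n := by
          gcongr; exact h.measure_lt_le_exp hρ hk hb.le x ht htδ
      _ = ENNReal.ofReal (exp (-(n * b) * t ^ (m / k))) := by
          rw [← ENNReal.ofReal_pow (exp_pos _).le, ← exp_nat_mul]
          ring_nf
  · gcongr
    exact h.measure_lt_le_of_rpow_le hρ hk hb.le x hs hsδ hst.le
  · have hempty : {y | ENNReal.ofReal t < ρ x y} = ∅ :=
      eq_empty_of_forall_notMem fun y hy =>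
        (hR x y).not_gt (hy.trans_le' (ENNReal.ofReal_le_ofReal hRt))
    rw [hempty, measure_empty, zero_pow (NeZero.ne n)]

end IsSuperregular

theorem exists_quantErr_le {X Y : Type*} [MeasurableSpace X] [MeasurableSpace Y]
    (ν : Measure Y) [IsProbabilityMeasure ν] {ρ : X → Y → ℝ≥0∞}
    (hρ : Measurable (Function.uncurry ρ)) {k m b : ℝ} {δ₀ : ℝ≥0∞} (hk : 0 < k) (hm : 0 < m)
    (hb : 0 < b) (hδ₀ : 0 < δ₀) (hsup : IsSuperregular ν (fun x y => ρ x y ^ (1 / k)) m b δ₀)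
    (hβ : δ₀ < ∞ → (⨆ x : X, ⨆ y : Y, (ρ x y) ^ (1 / k)) < ∞)
    (μX : Measure X) [IsProbabilityMeasure μX] :
    ∃ R θ : ℝ, 0 ≤ θ ∧ θ < 1 ∧ ∀ n : ℕ, 0 < n → quantErr μX ρ n ≤
      ENNReal.ofReal (Gamma (1 + k / m) * b ^ (-(k / m)) * n ^ (-(k / m)) + R * θ ^ n) := by
  have := nonempty_of_isProbabilityMeasure μX
  have hδ₀_top : δ₀ ≠ ∞ := hsup.ne_top hm hb
  obtain ⟨R, hR0, hR⟩ : ∃ R : ℝ, 0 ≤ R ∧ ∀ x y, ρ x y ≤ ENNReal.ofReal R := by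
    refine ⟨((⨆ x, ⨆ y, ρ x y ^ (1 / k)) ^ k).toReal, ENNReal.toReal_nonneg, fun x y => ?_⟩
    rw [ENNReal.ofReal_toReal (ENNReal.rpow_ne_top_of_nonneg hk.le (hβ hδ₀_top.lt_top).ne)]
    calc ρ x y = (ρ x y ^ (1 / k)) ^ k := by
          rw [← ENNReal.rpow_mul, one_div_mul_cancel hk.ne', ENNReal.rpow_one]
      _ ≤ _ := ENNReal.rpow_le_rpow (le_iSup₂ (f := fun x y => ρ x y ^ (1 / k)) x y) hk.le
  set s := δ₀.toReal / 2
  have hs : 0 < s := half_pos (ENNReal.toReal_pos hδ₀.ne' hδ₀_top)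
  have hsδ : ENNReal.ofReal s < δ₀ := by
    rw [ENNReal.ofReal_lt_iff_lt_toReal hs.le hδ₀_top]
    exact half_lt_self (ENNReal.toReal_pos hδ₀.ne' hδ₀_top)
  have hθ0 : 0 ≤ 1 - b * s ^ m := sub_nonneg.2 <| ENNReal.ofReal_le_one.1 <|
    (hsup (Classical.arbitrary X) s hs hsδ).trans prob_le_one
  refine ⟨R, 1 - b * s ^ m, hθ0, sub_lt_self _ (by positivity), fun n hn => ?_⟩
  have : NeZero n := ⟨hn.ne'⟩
  have hρx : ∀ x, Measurable (ρ x) := fun x => hρ.comp (measurable_const.prodMk measurable_id)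
  refine (quantErr_le_of_forall_lintegral_pi_le ν μX hρ
    fun x => hsup.lintegral_pi_iInf_le hρx hk hm hb hs hsδ hR x).trans_eq ?_
  rw [measure_univ, mul_one, ← ENNReal.ofReal_pow hθ0, ← ENNReal.ofReal_mul (by positivity),
    ← ENNReal.ofReal_add (by positivity) (by positivity), mul_rpow (Nat.cast_nonneg n) hb.le,
    add_comm (k / m)]
  congr 1
  ring

lemma tendsto_rpow_mul_pow_of_lt_one (s : ℝ) {θ : ℝ} (hθ0 : 0 ≤ θ) (hθ1 : θ < 1) :
    Tendsto (fun n : ℕ => (n : ℝ) ^ s * θ ^ n) atTop (𝓝 0) := by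
  refine squeeze_zero' (Eventually.of_forall fun n => by positivity) ?_
    (tendsto_pow_const_mul_const_pow_of_lt_one ⌈s⌉₊ hθ0 hθ1)
  filter_upwards [eventually_ge_atTop 1] with n hn
  gcongr
  calc (n : ℝ) ^ s ≤ (n : ℝ) ^ (⌈s⌉₊ : ℝ) :=
        rpow_le_rpow_of_exponent_le (by exact_mod_cast hn) (Nat.le_ceil s)
    _ = (n : ℝ) ^ ⌈s⌉₊ := rpow_natCast _ _

lemma limsup_rpow_mul_le_of_le_add_geometric {V : ℕ → ℝ≥0∞} {s C R θ : ℝ} (hθ0 : 0 ≤ θ)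
    (hθ1 : θ < 1) (hV : ∀ n : ℕ, 0 < n → V n ≤ ENNReal.ofReal (C * n ^ (-s) + R * θ ^ n)) :
    limsup (fun n : ℕ => (n : ℝ≥0∞) ^ s * V n) atTop ≤ ENNReal.ofReal C := by
  have hlim : Tendsto (fun n : ℕ => ENNReal.ofReal (C + R * ((n : ℝ) ^ s * θ ^ n))) atTop
      (𝓝 (ENNReal.ofReal C)) :=
    ENNReal.tendsto_ofReal <| by
      simpa using tendsto_const_nhds.add ((tendsto_rpow_mul_pow_of_lt_one s hθ0 hθ1).const_mul R)
  refine (limsup_le_limsup ?_).trans_eq hlim.limsup_eq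
  filter_upwards [eventually_gt_atTop 0] with n hn
  have hn' : (0 : ℝ) < n := Nat.cast_pos.2 hn
  calc (n : ℝ≥0∞) ^ s * V n
      ≤ ENNReal.ofReal ((n : ℝ) ^ s) * ENNReal.ofReal (C * n ^ (-s) + R * θ ^ n) := by
        rw [← ENNReal.ofReal_natCast, ENNReal.ofReal_rpow_of_pos hn']
        gcongr
        exact hV n hn
    _ = ENNReal.ofReal (C + R * ((n : ℝ) ^ s * θ ^ n)) := by
        rw [← ENNReal.ofReal_mul (by positivity), rpow_neg hn'.le]
        field_simp

section QuantizationDimension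

variable {X Y : Type*} [MeasurableSpace X] [MeasurableSpace Y]

lemma qRatio_le_of_rpow_mul_quantErr_le (μX : Measure X) (ρ : X → Y → ℝ≥0∞) {k s A : ℝ} {n : ℕ}
    (hk : 0 ≤ k) (hA : 0 < A) (hn : 0 < log n) (hden : log A < s * log n)
    (h : (n : ℝ≥0∞) ^ s * quantErr μX ρ n ≤ ENNReal.ofReal A) :
    qRatio μX ρ k n ≤ k * log n / (s * log n - log A) := by
  have hn0 : (0 : ℝ) < n := Nat.cast_pos.2 (Nat.pos_of_ne_zero fun h0 => by simp [h0] at hn)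
  have hv : (n : ℝ) ^ s * (quantErr μX ρ n).toReal ≤ A := by
    have := ENNReal.toReal_mono ENNReal.ofReal_ne_top h
    rwa [ENNReal.toReal_mul, ← ENNReal.ofReal_natCast, ENNReal.ofReal_rpow_of_pos hn0,
      ENNReal.toReal_ofReal (by positivity), ENNReal.toReal_ofReal hA.le] at this
  have hnum : 0 ≤ k * log n := mul_nonneg hk hn.le
  unfold qRatio
  rcases ENNReal.toReal_nonneg.eq_or_lt with hv0 | hv0
  -- `V_n = 0` (or `∞`) gives `qRatio` the junk value `k log n / log 0 = 0`.
  · rw [← hv0, div_zero, log_zero, div_zero]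
    exact div_nonneg hnum (sub_pos.2 hden).le
  · have hlog : log ((n : ℝ) ^ s * (quantErr μX ρ n).toReal) ≤ log A :=
      log_le_log (by positivity) hv
    rw [log_mul (by positivity) hv0.ne', log_rpow hn0] at hlog
    rw [one_div, log_inv]
    exact div_le_div_of_nonneg_left hnum (sub_pos.2 hden) (by linarith)

lemma limsup_qRatio_le (μX : Measure X) (ρ : X → Y → ℝ≥0∞) {k m A : ℝ} (hk : 0 < k)
    (hm : 0 < m) (hA : 0 < A)
    (h : ∀ᶠ n : ℕ in atTop, (n : ℝ≥0∞) ^ (k / m) * quantErr μX ρ n ≤ ENNReal.ofReal A) :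
    limsup (fun n : ℕ => (qRatio μX ρ k n : EReal)) atTop ≤ m := by
  have hlog : Tendsto (fun n : ℕ => log n) atTop atTop :=
    tendsto_log_atTop.comp tendsto_natCast_atTop_atTop
  have hbound : Tendsto (fun n : ℕ => k * log n / (k / m * log n - log A)) atTop (𝓝 m) := by
    have hL : Tendsto (fun L => k / (k / m - log A / L)) atTop (𝓝 (k / (k / m - 0))) :=
      tendsto_const_nhds.div (tendsto_const_nhds.sub (tendsto_const_nhds.div_atTop tendsto_id))
        (by rw [sub_zero]; positivity)
    rw [sub_zero, div_div_cancel₀ hk.ne'] at hL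
    refine (hL.comp hlog).congr' ?_
    filter_upwards [hlog.eventually_gt_atTop 0] with n hn
    simp only [Function.comp_apply]
    field_simp
  refine (limsup_le_limsup ?_).trans_eq (EReal.tendsto_coe.2 hbound).limsup_eq
  filter_upwards [h, hlog.eventually_gt_atTop 0, hlog.eventually_gt_atTop (log A / (k / m))]
    with n hn hpos hden
  rw [div_lt_iff₀' (by positivity)] at hden
  exact EReal.coe_le_coe_iff.2 (qRatio_le_of_rpow_mul_quantErr_le μX ρ hk.le hA hpos hden hn)

end QuantizationDimension

/-- If `ν` is a probability measure on `Y` that is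
`ρ^{1/k}`-superregular of dimension `m` with constants `b, δ₀`, and
`sup_{x,y} ρ(x,y)^{1/k} < ∞` whenever `δ₀ < ∞`, then for every random variable `X`:
(i) the upper `k`-th quantization dimension is at most `m`; and (ii) if the `k`-th
quantization dimension exists and equals `m`, then the upper `k`-th quantization
coefficient is at most `Γ(1+k/m)·b^{-k/m}`. -/
theorem quantization_dimension_coefficient_upper_bound
    {X Y : Type*} [MeasurableSpace X] [MeasurableSpace Y]
    (ν : Measure Y) [IsProbabilityMeasure ν]
    (ρ : X → Y → ℝ≥0∞) (hρ : Measurable (Function.uncurry ρ))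
    (k m b : ℝ) (δ₀ : ℝ≥0∞) (hk : 0 < k) (hm : 0 < m) (hb : 0 < b) (hδ₀ : 0 < δ₀)
    (hsup : ∀ x : X, ∀ t : ℝ, 0 < t → ENNReal.ofReal t < δ₀ →
      ENNReal.ofReal (b * t ^ m) ≤ ν {y | (ρ x y) ^ (1 / k) < ENNReal.ofReal t})
    (hβ : δ₀ < ∞ → (⨆ x : X, ⨆ y : Y, (ρ x y) ^ (1 / k)) < ∞)
    (μX : Measure X) [IsProbabilityMeasure μX] :
    (Filter.limsup (fun n : ℕ => ((qRatio μX ρ k n : ℝ) : EReal)) atTop ≤ ((m : ℝ) : EReal)) ∧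
    ((Filter.liminf (fun n : ℕ => ((qRatio μX ρ k n : ℝ) : EReal)) atTop = ((m : ℝ) : EReal)
        ∧ Filter.limsup (fun n : ℕ => ((qRatio μX ρ k n : ℝ) : EReal)) atTop
            = ((m : ℝ) : EReal)) →
      Filter.limsup (fun n : ℕ => (n : ℝ≥0∞) ^ (k / m) * quantErr μX ρ n) atTop ≤
        ENNReal.ofReal (Real.Gamma (1 + k / m) * b ^ (-(k / m)))) := by
  obtain ⟨R, θ, hθ0, hθ1, hV⟩ := exists_quantErr_le ν hρ hk hm hb hδ₀ hsup hβ μX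
  have hcoef := limsup_rpow_mul_le_of_le_add_geometric hθ0 hθ1 hV
  have hC : 0 < Real.Gamma (1 + k / m) * b ^ (-(k / m)) :=
    mul_pos (Real.Gamma_pos_of_pos (by positivity)) (Real.rpow_pos_of_pos hb _)
  have hA : ∀ᶠ n : ℕ in atTop, (n : ℝ≥0∞) ^ (k / m) * quantErr μX ρ n ≤
      ENNReal.ofReal (Real.Gamma (1 + k / m) * b ^ (-(k / m)) + 1) :=
    (eventually_lt_of_limsup_lt <| hcoef.trans_lt <|
      (ENNReal.ofReal_lt_ofReal_iff (by positivity)).2 (lt_add_one _)).mono fun _ => le_of_lt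
  exact ⟨limsup_qRatio_le μX ρ hk hm (by positivity) hA, fun _ => hcoef⟩
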